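/- (Complementarity for events) Let e1, e2 be connected events in the LTSI of CCSKP (i.e., there are t1 ∈ e1, t2 ∈ e2 that are connected transitions). Then: (1) exactly one of e1 ι e2 and e1 ⊙ e2 holds, where e1 ι e2 iff t1 ι t2 for some t1 ∈ e1, t2 ∈ e2, and e1 ⊙ e2 iff label(t1) ⊙ label(t2) for some t1 ∈ e1, t2 ∈ e2; (2) if e1 ⌣ e2 (core independent) then e1 ι e2; (3) if e1, e2 are composable and e1 ι e2 then e1 ⌣ e2. -/
import Mathlib


namespace CCSKP

/-- Action labels: names, co-names and τ. -/
inductive Act : Type where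
  | name (a : ℕ)
  | coname (a : ℕ)
  | tau
deriving DecidableEq

/-- Complement of an action label. -/
def Act.bar : Act → Act
  | .name a => .coname a
  | .coname a => .name a
  | .tau => .tau

/-- Directions Left / Right. -/
inductive Dir : Type where
  | L
  | R
deriving DecidableEq

/-- The opposite direction. -/
def Dir.op : Dir → Dir
  | .L => .R
  | .R => .L

/-- Selection according to a direction. -/
def Dir.sel {α : Type*} : Dir → α → α → α
  | .L, x, _ => x
  | .R, _, y => y

/-- Keys. -/
abbrev Key := ℕ

/-- CCSK processes. -/
inductive Proc : Type where
  | nil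
  | pre (α : Act) (X : Proc)
  | res (X : Proc) (a : ℕ)
  | sum (X Y : Proc)
  | par (X Y : Proc)
  | keyed (α : Act) (k : Key) (X : Proc)
deriving DecidableEq

/-- The set of keys occurring in a process. -/
def Proc.keys : Proc → Finset Key
  | .nil => ∅
  | .pre _ X => X.keys
  | .res X _ => X.keys
  | .sum X Y => X.keys ∪ Y.keys
  | .par X Y => X.keys ∪ Y.keys
  | .keyed _ k X => insert k X.keys

/-- Standard processes: no keys. -/
def Proc.Std (X : Proc) : Prop := X.keys = ∅

/-- Proof keyed labels. -/
inductive PLab : Type where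
  | act (α : Act) (k : Key)
  | par (d : Dir) (θ : PLab)
  | sum (d : Dir) (θ : PLab)
  | syn (θL θR : PLab)
deriving DecidableEq

/-- The action ℓ(θ) of a proof keyed label. -/
def PLab.lab : PLab → Act
  | .act α _ => α
  | .par _ θ => θ.lab
  | .sum _ θ => θ.lab
  | .syn _ _ => .tau

/-- The key of a proof keyed label. -/
def PLab.key : PLab → Key
  | .act _ k => k
  | .par _ θ => θ.key
  | .sum _ θ => θ.key
  | .syn θL _ => θL.key

/-- θ is of the form υ α[k] (no synchronisation pair). -/
def PLab.IsPre : PLab → Prop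
  | .act _ _ => True
  | .par _ θ => θ.IsPre
  | .sum _ θ => θ.IsPre
  | .syn _ _ => False

/-- Forward transitions of CCSKP. -/
inductive Fwd : Proc → PLab → Proc → Prop where
  | act {α : Act} {X : Proc} {k : Key} :
      X.keys = ∅ → Fwd (.pre α X) (.act α k) (.keyed α k X)
  | pre {X X' : Proc} {θ : PLab} {α : Act} {k : Key} :
      Fwd X θ X' → θ.key ≠ k → Fwd (.keyed α k X) θ (.keyed α k X')
  | res {X X' : Proc} {θ : PLab} {a : ℕ} :
      Fwd X θ X' → θ.lab ≠ .name a → θ.lab ≠ .coname a →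
      Fwd (.res X a) θ (.res X' a)
  | parL {X X' Y : Proc} {θ : PLab} :
      Fwd X θ X' → θ.key ∉ Y.keys → Fwd (.par X Y) (.par .L θ) (.par X' Y)
  | parR {X Y Y' : Proc} {θ : PLab} :
      Fwd Y θ Y' → θ.key ∉ X.keys → Fwd (.par X Y) (.par .R θ) (.par X Y')
  | syn {X X' Y Y' : Proc} {θ1 θ2 : PLab} :
      Fwd X θ1 X' → Fwd Y θ2 Y' → θ1.IsPre → θ2.IsPre → θ1.lab ≠ .tau →
      θ2.lab = θ1.lab.bar → θ2.key = θ1.key →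
      Fwd (.par X Y) (.syn θ1 θ2) (.par X' Y')
  | sumL {X X' Y : Proc} {θ : PLab} :
      Fwd X θ X' → Y.keys = ∅ → Fwd (.sum X Y) (.sum .L θ) (.sum X' Y)
  | sumR {X Y Y' : Proc} {θ : PLab} :
      Fwd Y θ Y' → X.keys = ∅ → Fwd (.sum X Y) (.sum .R θ) (.sum X Y')

/-- Backward transitions of CCSKP: the exactly symmetric rules. -/
inductive Bwd : Proc → PLab → Proc → Prop where
  | act {α : Act} {X : Proc} {k : Key} :
      X.keys = ∅ → Bwd (.keyed α k X) (.act α k) (.pre α X)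
  | pre {X' X : Proc} {θ : PLab} {α : Act} {k : Key} :
      Bwd X' θ X → θ.key ≠ k → Bwd (.keyed α k X') θ (.keyed α k X)
  | res {X' X : Proc} {θ : PLab} {a : ℕ} :
      Bwd X' θ X → θ.lab ≠ .name a → θ.lab ≠ .coname a →
      Bwd (.res X' a) θ (.res X a)
  | parL {X' X Y : Proc} {θ : PLab} :
      Bwd X' θ X → θ.key ∉ Y.keys → Bwd (.par X' Y) (.par .L θ) (.par X Y)
  | parR {X Y' Y : Proc} {θ : PLab} :
      Bwd Y' θ Y → θ.key ∉ X.keys → Bwd (.par X Y') (.par .R θ) (.par X Y)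
  | syn {X' X Y' Y : Proc} {θ1 θ2 : PLab} :
      Bwd X' θ1 X → Bwd Y' θ2 Y → θ1.IsPre → θ2.IsPre → θ1.lab ≠ .tau →
      θ2.lab = θ1.lab.bar → θ2.key = θ1.key →
      Bwd (.par X' Y') (.syn θ1 θ2) (.par X Y)
  | sumL {X' X Y : Proc} {θ : PLab} :
      Bwd X' θ X → Y.keys = ∅ → Bwd (.sum X' Y) (.sum .L θ) (.sum X Y)
  | sumR {X Y' Y : Proc} {θ : PLab} :
      Bwd Y' θ Y → X.keys = ∅ → Bwd (.sum X Y') (.sum .R θ) (.sum X Y)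

/-- A combined step: forward if `d = true`, backward if `d = false`. -/
def Step (X : Proc) (d : Bool) (θ : PLab) (Y : Proc) : Prop :=
  if d then Fwd X θ Y else Bwd X θ Y

/-- Transitions of CCSKP (forward or backward). -/
structure Tr : Type where
  src : Proc
  fwd? : Bool
  lbl : PLab
  tgt : Proc
deriving DecidableEq

/-- A transition is valid if it is derivable in the LTS. -/
def Tr.Valid (t : Tr) : Prop := Step t.src t.fwd? t.lbl t.tgt

/-- The reverse of a transition. -/
def Tr.rev (t : Tr) : Tr := ⟨t.tgt, !t.fwd?, t.lbl, t.src⟩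

/-- The key of a transition. -/
def Tr.key (t : Tr) : Key := t.lbl.key

/-- Existence of a path between two processes. -/
inductive Reach : Proc → Proc → Prop where
  | refl (X : Proc) : Reach X X
  | step {X Y Z : Proc} {d : Bool} {θ : PLab} :
      Step X d θ Y → Reach Y Z → Reach X Z

/-- t is connected to u: there is a path from the source of t to the target of u. -/
def Tr.ConnectedTo (t u : Tr) : Prop := Reach t.src u.tgt

/-- t and u are connected. -/
def Tr.Connected (t u : Tr) : Prop := t.ConnectedTo u ∨ u.ConnectedTo t

/-- X cannot perform a backward transition. -/
def Rooted (X : Proc) : Prop := ∀ (θ : PLab) (Y : Proc), ¬ Bwd X θ Y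

/-- Reachable processes: target of a rooted path from a standard origin. -/
def Reachable (X : Proc) : Prop := ∃ O : Proc, O.Std ∧ Rooted O ∧ Reach O X

/-- The connectivity relation ⌢ on proof keyed labels. -/
inductive Conn : PLab → PLab → Prop where
  | a1 {α : Act} {k : Key} {θ : PLab} : Conn (.act α k) θ
  | a2 {θ : PLab} {α : Act} {k : Key} :
      (∀ (β : Act) (k' : Key), θ ≠ .act β k') → Conn θ (.act α k)
  | c1 {d : Dir} {θ θ' : PLab} : Conn θ θ' → Conn (.sum d θ) (.sum d θ')
  | c2 {d : Dir} {θ θ' : PLab} : Conn (.sum d θ) (.sum d.op θ')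
  | p1 {d : Dir} {θ θ' : PLab} : Conn θ θ' → Conn (.par d θ) (.par d θ')
  | p2 {d : Dir} {θ θ' : PLab} : Conn (.par d θ) (.par d.op θ')
  | s1 {d : Dir} {θ θL θR : PLab} : Conn θ (d.sel θL θR) → Conn (.par d θ) (.syn θL θR)
  | s2 {d : Dir} {θ θL θR : PLab} : Conn (d.sel θL θR) θ → Conn (.syn θL θR) (.par d θ)
  | s3 {θ1 θ2 θ1' θ2' : PLab} : Conn θ1 θ1' → Conn θ2 θ2' → Conn (.syn θ1 θ2) (.syn θ1' θ2')

/-- The dependence relation ⊙ on proof keyed labels. -/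
inductive Dep : PLab → PLab → Prop where
  | a1 {α : Act} {k : Key} {θ : PLab} : Dep (.act α k) θ
  | a2 {θ : PLab} {α : Act} {k : Key} :
      (∀ (β : Act) (k' : Key), θ ≠ .act β k') → Dep θ (.act α k)
  | c1 {d : Dir} {θ θ' : PLab} : Dep θ θ' → Dep (.sum d θ) (.sum d θ')
  | c2 {d : Dir} {θ θ' : PLab} : Dep (.sum d θ) (.sum d.op θ')
  | p1 {d : Dir} {θ θ' : PLab} : Dep θ θ' → Dep (.par d θ) (.par d θ')
  | p2k {d : Dir} {θ θ' : PLab} : θ.key = θ'.key → Dep (.par d θ) (.par d.op θ')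
  | s1 {d : Dir} {θ θL θR : PLab} : Dep θ (d.sel θL θR) → Dep (.par d θ) (.syn θL θR)
  | s2 {d : Dir} {θ θL θR : PLab} : Dep (d.sel θL θR) θ → Dep (.syn θL θR) (.par d θ)
  | s3a {θ1 θ2 θ1' θ2' : PLab} : Dep θ1 θ1' → Conn θ2 θ2' → Dep (.syn θ1 θ2) (.syn θ1' θ2')
  | s3b {θ1 θ2 θ1' θ2' : PLab} : Conn θ1 θ1' → Dep θ2 θ2' → Dep (.syn θ1 θ2) (.syn θ1' θ2')

/-- The independence relation ι on proof keyed labels. -/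
inductive Ind : PLab → PLab → Prop where
  | c1 {d : Dir} {θ θ' : PLab} : Ind θ θ' → Ind (.sum d θ) (.sum d θ')
  | p1 {d : Dir} {θ θ' : PLab} : Ind θ θ' → Ind (.par d θ) (.par d θ')
  | p2k {d : Dir} {θ θ' : PLab} : θ.key ≠ θ'.key → Ind (.par d θ) (.par d.op θ')
  | s1 {d : Dir} {θ θL θR : PLab} : Ind θ (d.sel θL θR) → Ind (.par d θ) (.syn θL θR)
  | s2 {d : Dir} {θ θL θR : PLab} : Ind (d.sel θL θR) θ → Ind (.syn θL θR) (.par d θ)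
  | s3 {θ1 θ2 θ1' θ2' : PLab} : Ind θ1 θ1' → Ind θ2 θ2' → Ind (.syn θ1 θ2) (.syn θ1' θ2')

/-- Independence of transitions: connected transitions with independent labels. -/
def Tr.ind (t u : Tr) : Prop := t.Valid ∧ u.Valid ∧ t.Connected u ∧ Ind t.lbl u.lbl

/-- Dependence of transitions: connected transitions with dependent labels. -/
def Tr.dep (t u : Tr) : Prop := t.Valid ∧ u.Valid ∧ t.Connected u ∧ Dep t.lbl u.lbl

end CCSKP

namespace CCSKP

/-- A commuting square of transitions: t, u coinitial; u', t' the opposite sides. -/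
def Square (t u u' t' : Tr) : Prop :=
  t.Valid ∧ u.Valid ∧ u'.Valid ∧ t'.Valid ∧
  t.src = u.src ∧ u'.src = t.tgt ∧ t'.src = u.tgt ∧ u'.tgt = t'.tgt ∧
  u'.lbl = u.lbl ∧ u'.fwd? = u.fwd? ∧ t'.lbl = t.lbl ∧ t'.fwd? = t.fwd?

/-- Event equivalence: the smallest equivalence such that in a commuting square
with independent sides, `t ∼ t'` and `reverse t ∼ t'`. -/
inductive EvEq : Tr → Tr → Prop where
  | refl (t : Tr) : EvEq t t
  | symm {t u : Tr} : EvEq t u → EvEq u t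
  | trans {t u v : Tr} : EvEq t u → EvEq u v → EvEq t v
  | sq {t u u' t' : Tr} : Square t u u' t' → t.ind u → EvEq t t'
  | sqrev {t u u' t' : Tr} : Square t u u' t' → t.ind u → EvEq t.rev t'

/-- Paths between processes. -/
inductive Path : Proc → Proc → Type where
  | nil (X : Proc) : Path X X
  | cons {X Y Z : Proc} (t : Tr) (hv : t.Valid) (hs : t.src = X) (ht : t.tgt = Y)
      (r : Path Y Z) : Path X Z

open Classical in
/-- Signed number of occurrences in a path of the event represented by `e`. -/
noncomputable def Path.count (e : Tr) : ∀ {X Y : Proc}, Path X Y → ℤ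
  | _, _, .nil _ => 0
  | _, _, .cons t _ _ _ r =>
      (if EvEq t e then (1 : ℤ) else if EvEq t e.rev then (-1 : ℤ) else 0) + Path.count e r

/-- Membership of a transition in a path. -/
def Path.Mem (u : Tr) : ∀ {X Y : Proc}, Path X Y → Prop
  | _, _, .nil _ => False
  | _, _, .cons t _ _ _ r => u = t ∨ Path.Mem u r

/-- Length of a path. -/
def Path.length : ∀ {X Y : Proc}, Path X Y → ℕ
  | _, _, .nil _ => 0
  | _, _, .cons _ _ _ _ r => Path.length r + 1

/-- `e` represents a forward event belonging to ev(X). -/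
def InEv (X : Proc) (e : Tr) : Prop :=
  e.Valid ∧ e.fwd? = true ∧
  ∃ (O : Proc) (r : Path O X), Rooted O ∧ 0 < Path.count e r

/-- Causal ordering on (representatives of) forward events. -/
def CausLE (e e' : Tr) : Prop :=
  ∀ (O Z : Proc) (r : Path O Z), Rooted O → 0 < Path.count e' r → 0 < Path.count e r

/-- Strict causal ordering on (representatives of) forward events. -/
def EvLT (e e' : Tr) : Prop := CausLE e e' ∧ ¬ EvEq e e'

/-- Core independence on events. -/
def CoreInd (e e' : Tr) : Prop :=
  ∃ t t' : Tr, EvEq t e ∧ EvEq t' e' ∧ t.src = t'.src ∧ t.ind t'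

/-- Independence on events. -/
def EvInd (e e' : Tr) : Prop := ∃ t t' : Tr, EvEq t e ∧ EvEq t' e' ∧ t.ind t'

/-- Dependence on events. -/
def EvDep (e e' : Tr) : Prop :=
  ∃ t t' : Tr, EvEq t e ∧ EvEq t' e' ∧ t.Valid ∧ t'.Valid ∧ Dep t.lbl t'.lbl

/-- Connected events. -/
def EvConnected (e e' : Tr) : Prop :=
  ∃ t t' : Tr, EvEq t e ∧ EvEq t' e' ∧ t.Valid ∧ t'.Valid ∧ t.Connected t'

/-- Composable events. -/
def EvComposable (e e' : Tr) : Prop :=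
  ∃ t t' : Tr, EvEq t e ∧ EvEq t' e' ∧ t.Valid ∧ t'.Valid ∧ t.tgt = t'.src

/-- The forward version of a transition. -/
def Tr.fwdOf (t : Tr) : Tr := if t.fwd? then t else t.rev

/-- Event key equivalence on forward transitions: same key, and a path between the
targets avoiding that key. -/
def KeyEqF (t1 t2 : Tr) : Prop :=
  t1.key = t2.key ∧ ∃ r : Path t1.tgt t2.tgt, ∀ u : Tr, Path.Mem u r → u.key ≠ t1.key

/-- Event key equivalence on arbitrary transitions. -/
def KeyEq (t1 t2 : Tr) : Prop := KeyEqF t1.fwdOf t2.fwdOf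

/-- The generator ord(X) of the key ordering. -/
def ordRel : Proc → Key → Key → Prop
  | .nil, _, _ => False
  | .pre _ X, m, n => ordRel X m n
  | .res X _, m, n => ordRel X m n
  | .sum X Y, m, n => ordRel X m n ∨ ordRel Y m n
  | .par X Y, m, n => ordRel X m n ∨ ordRel Y m n
  | .keyed _ k X, m, n => ordRel X m n ∨ (m = k ∧ n ∈ X.keys)

/-- Key ordering ≤_X : reflexive transitive closure of ord(X). -/
def keyLE (X : Proc) : Key → Key → Prop := Relation.ReflTransGen (ordRel X)

end CCSKP

namespace CCSKP

/- ===== Auxiliary lemmas ===== -/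

lemma dir_op_op (d : Dir) : d.op.op = d := by cases d <;> rfl

lemma connAct : ∀ (θ : PLab) (α : Act) (k : Key), Conn θ (.act α k)
  | .act _ _, _, _ => .a1
  | .par _ _, _, _ => .a2 (fun _ _ h => PLab.noConfusion h)
  | .sum _ _, _, _ => .a2 (fun _ _ h => PLab.noConfusion h)
  | .syn _ _, _, _ => .a2 (fun _ _ h => PLab.noConfusion h)

lemma conn_symm {θ θ' : PLab} (h : Conn θ θ') : Conn θ' θ := by
  induction h with
  | a1 => exact connAct _ _ _
  | a2 _ => exact .a1
  | c1 _ ih => exact .c1 ih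
  | c2 => rename_i d θ θ'; cases d <;> exact Conn.c2
  | p1 _ ih => exact .p1 ih
  | p2 => rename_i d θ θ'; cases d <;> exact Conn.p2
  | s1 _ ih => exact .s2 ih
  | s2 _ ih => exact .s1 ih
  | s3 _ _ ih1 ih2 => exact .s3 ih1 ih2

lemma ind_symm {θ θ' : PLab} (h : Ind θ θ') : Ind θ' θ := by
  induction h with
  | c1 _ ih => exact .c1 ih
  | p1 _ ih => exact .p1 ih
  | p2k hk => rename_i d _ _; cases d <;> exact Ind.p2k (Ne.symm hk)
  | s1 _ ih => exact .s2 ih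
  | s2 _ ih => exact .s1 ih
  | s3 _ _ ih1 ih2 => exact .s3 ih1 ih2

lemma ind_conn {θ θ' : PLab} (h : Ind θ θ') : Conn θ θ' := by
  induction h with
  | c1 _ ih => exact .c1 ih
  | p1 _ ih => exact .p1 ih
  | p2k _ => exact .p2
  | s1 _ ih => exact .s1 ih
  | s2 _ ih => exact .s2 ih
  | s3 _ _ ih1 ih2 => exact .s3 ih1 ih2

lemma conn_total {θ θ' : PLab} (h : Conn θ θ') : Ind θ θ' ∨ Dep θ θ' := by
  induction h with
  | a1 => exact .inr .a1
  | a2 h => exact .inr (.a2 h)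
  | c1 _ ih => exact ih.imp .c1 .c1
  | c2 => exact .inr .c2
  | p1 _ ih => exact ih.imp .p1 .p1
  | p2 =>
      rename_i d θ θ'
      by_cases hk : θ.key = θ'.key
      · exact .inr (.p2k hk)
      · exact .inl (.p2k hk)
  | s1 _ ih => exact ih.imp .s1 .s1
  | s2 _ ih => exact ih.imp .s2 .s2
  | s3 h1 h2 ih1 ih2 =>
      rcases ih1 with i1 | d1
      · rcases ih2 with i2 | d2
        · exact .inl (.s3 i1 i2)
        · exact .inr (.s3b (ind_conn i1) d2)
      · exact .inr (.s3a d1 h2)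

lemma ind_dep_false : ∀ {θ θ' : PLab}, Ind θ θ' → Dep θ θ' → False := by
  intro θ θ' hi
  induction hi with
  | c1 h ih =>
      rename_i d _ _
      intro hd
      cases d <;> cases hd <;> exact ih ‹_›
  | p1 h ih =>
      rename_i d _ _
      intro hd
      cases d <;> cases hd <;> first | exact ih ‹_› | exact absurd rfl (by assumption)
  | p2k hk =>
      rename_i d _ _
      intro hd
      cases d <;> cases hd <;> exact hk ‹_›
  | s1 h ih =>
      intro hd
      cases hd
      exact ih ‹_›
  | s2 h ih =>
      rename_i d _ _ _
      intro hd
      cases d <;> cases hd <;> exact ih ‹_›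
  | s3 h1 h2 ih1 ih2 =>
      intro hd
      cases hd with
      | s3a hd _ => exact ih1 hd
      | s3b _ hd => exact ih2 hd
lemma fwd_keys {X Y : Proc} {θ : PLab} (h : Fwd X θ Y) :
    Y.keys = insert θ.key X.keys := by
  induction h with
  | act hstd => simp [Proc.keys, PLab.key, hstd]
  | pre _ _ ih =>
      simp only [Proc.keys, PLab.key, ih]
      exact Finset.insert_comm _ _ _
  | res _ _ _ ih => simpa [Proc.keys, PLab.key] using ih
  | parL _ _ ih => simp [Proc.keys, PLab.key, ih, Finset.insert_union]
  | parR _ _ ih => simp [Proc.keys, PLab.key, ih, Finset.union_insert]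
  | syn h1 h2 _ _ _ _ hkey ih1 ih2 =>
      ext x
      simp only [Proc.keys, PLab.key, ih1, ih2, hkey, Finset.mem_union, Finset.mem_insert]
      tauto
  | sumL _ _ ih => simp [Proc.keys, PLab.key, ih, Finset.insert_union]
  | sumR _ _ ih => simp [Proc.keys, PLab.key, ih, Finset.union_insert]

lemma fwd_fresh {X Y : Proc} {θ : PLab} (h : Fwd X θ Y) : θ.key ∉ X.keys := by
  induction h with
  | act hstd => simp [Proc.keys, PLab.key, hstd]
  | pre _ hk ih => simp [Proc.keys, PLab.key, Finset.mem_insert, hk, ih]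
  | res _ _ _ ih => simpa [Proc.keys, PLab.key] using ih
  | parL _ hY ih => simp [Proc.keys, PLab.key, ih, hY]
  | parR _ hX ih => simp [Proc.keys, PLab.key, ih, hX]
  | syn h1 h2 _ _ _ _ hkey ih1 ih2 =>
      simp only [Proc.keys, PLab.key, Finset.mem_union, not_or]
      exact ⟨ih1, hkey ▸ ih2⟩
  | sumL _ hY ih => simp [Proc.keys, PLab.key, ih, hY]
  | sumR _ hX ih => simp [Proc.keys, PLab.key, ih, hX]

lemma fwd_keys_mono {X Y : Proc} {θ : PLab} (h : Fwd X θ Y) {k : Key}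
    (hk : k ∉ Y.keys) : k ∉ X.keys :=
  fun hm => hk (by rw [fwd_keys h]; exact Finset.mem_insert_of_mem hm)

lemma fwd_keys_notmem {X Y : Proc} {θ : PLab} (h : Fwd X θ Y) {k : Key}
    (hne : k ≠ θ.key) (hk : k ∉ X.keys) : k ∉ Y.keys := by
  rw [fwd_keys h]
  simp [Finset.mem_insert, hne, hk]

lemma bwd_fwd {X Y : Proc} {θ : PLab} (h : Bwd X θ Y) : Fwd Y θ X := by
  induction h with
  | act h => exact .act h
  | pre _ hk ih => exact .pre ih hk
  | res _ h1 h2 ih => exact .res ih h1 h2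
  | parL _ hk ih => exact .parL ih hk
  | parR _ hk ih => exact .parR ih hk
  | syn _ _ p1 p2 h1 h2 h3 ih1 ih2 => exact .syn ih1 ih2 p1 p2 h1 h2 h3
  | sumL _ h ih => exact .sumL ih h
  | sumR _ h ih => exact .sumR ih h

lemma fwd_bwd {X Y : Proc} {θ : PLab} (h : Fwd X θ Y) : Bwd Y θ X := by
  induction h with
  | act h => exact .act h
  | pre _ hk ih => exact .pre ih hk
  | res _ h1 h2 ih => exact .res ih h1 h2
  | parL _ hk ih => exact .parL ih hk
  | parR _ hk ih => exact .parR ih hk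
  | syn _ _ p1 p2 h1 h2 h3 ih1 ih2 => exact .syn ih1 ih2 p1 p2 h1 h2 h3
  | sumL _ h ih => exact .sumL ih h
  | sumR _ h ih => exact .sumR ih h

/-- Shape compatibility of processes, preserved by transitions. -/
inductive Sh : Proc → Proc → Prop where
  | nil : Sh .nil .nil
  | pp {α β : Act} {X Y : Proc} : Sh X Y → Sh (.pre α X) (.pre β Y)
  | pk {α β : Act} {k : Key} {X Y : Proc} : Sh X Y → Sh (.pre α X) (.keyed β k Y)
  | kp {α β : Act} {k : Key} {X Y : Proc} : Sh X Y → Sh (.keyed α k X) (.pre β Y)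
  | kk {α β : Act} {k k' : Key} {X Y : Proc} : Sh X Y → Sh (.keyed α k X) (.keyed β k' Y)
  | res {X Y : Proc} {a b : ℕ} : Sh X Y → Sh (.res X a) (.res Y b)
  | sum {X X' Y Y' : Proc} : Sh X X' → Sh Y Y' → Sh (.sum X Y) (.sum X' Y')
  | par {X X' Y Y' : Proc} : Sh X X' → Sh Y Y' → Sh (.par X Y) (.par X' Y')

lemma sh_refl : ∀ X : Proc, Sh X X
  | .nil => .nil
  | .pre _ X => .pp (sh_refl X)
  | .res X _ => .res (sh_refl X)
  | .sum X Y => .sum (sh_refl X) (sh_refl Y)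
  | .par X Y => .par (sh_refl X) (sh_refl Y)
  | .keyed _ _ X => .kk (sh_refl X)

lemma sh_symm {X Y : Proc} (h : Sh X Y) : Sh Y X := by
  induction h with
  | nil => exact .nil
  | pp _ ih => exact .pp ih
  | pk _ ih => exact .kp ih
  | kp _ ih => exact .pk ih
  | kk _ ih => exact .kk ih
  | res _ ih => exact .res ih
  | sum _ _ ih1 ih2 => exact .sum ih1 ih2
  | par _ _ ih1 ih2 => exact .par ih1 ih2

lemma sh_trans {X Y : Proc} (h : Sh X Y) : ∀ {Z : Proc}, Sh Y Z → Sh X Z := by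
  induction h with
  | nil => exact fun h2 => h2
  | pp _ ih => intro Z h2; cases h2 with
      | pp h => exact .pp (ih h)
      | pk h => exact .pk (ih h)
  | pk _ ih => intro Z h2; cases h2 with
      | kp h => exact .pp (ih h)
      | kk h => exact .pk (ih h)
  | kp _ ih => intro Z h2; cases h2 with
      | pp h => exact .kp (ih h)
      | pk h => exact .kk (ih h)
  | kk _ ih => intro Z h2; cases h2 with
      | kp h => exact .kp (ih h)
      | kk h => exact .kk (ih h)
  | res _ ih => intro Z h2; cases h2 with
      | res h => exact .res (ih h)
  | sum _ _ ih1 ih2 => intro Z h2; cases h2 with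
      | sum g1 g2 => exact .sum (ih1 g1) (ih2 g2)
  | par _ _ ih1 ih2 => intro Z h2; cases h2 with
      | par g1 g2 => exact .par (ih1 g1) (ih2 g2)

lemma fwd_sh {X Y : Proc} {θ : PLab} (h : Fwd X θ Y) : Sh X Y := by
  induction h with
  | act _ => exact .pk (sh_refl _)
  | pre _ _ ih => exact .kk ih
  | res _ _ _ ih => exact .res ih
  | parL _ _ ih => exact .par ih (sh_refl _)
  | parR _ _ ih => exact .par (sh_refl _) ih
  | syn _ _ _ _ _ _ _ ih1 ih2 => exact .par ih1 ih2
  | sumL _ _ ih => exact .sum ih (sh_refl _)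
  | sumR _ _ ih => exact .sum (sh_refl _) ih

lemma step_sh {X Y : Proc} {d : Bool} {θ : PLab} (h : Step X d θ Y) : Sh X Y := by
  cases d
  · exact sh_symm (fwd_sh (bwd_fwd (by simpa [Step] using h)))
  · exact fwd_sh (by simpa [Step] using h)

lemma reach_sh {X Z : Proc} (h : Reach X Z) : Sh X Z := by
  induction h with
  | refl X => exact sh_refl X
  | step hs _ ih => exact sh_trans (step_sh hs) ih

/-- A transition with label θ at X (as source or target). -/
def AtF (X : Proc) (θ : PLab) : Prop :=
  (∃ Y, Fwd X θ Y) ∨ (∃ Y, Fwd Y θ X)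

lemma at_nil {θ : PLab} (h : AtF .nil θ) : False := by
  rcases h with ⟨Y, h⟩ | ⟨Y, h⟩ <;> cases h

lemma at_pre {α : Act} {X : Proc} {θ : PLab} (h : AtF (.pre α X) θ) :
    ∃ k, θ = .act α k := by
  rcases h with ⟨Y, h⟩ | ⟨Y, h⟩ <;> cases h
  exact ⟨_, rfl⟩

lemma at_keyed {α : Act} {k : Key} {X : Proc} {θ : PLab}
    (h : AtF (.keyed α k X) θ) : θ = .act α k ∨ AtF X θ := by
  rcases h with ⟨Y, h⟩ | ⟨Y, h⟩ <;> cases h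
  · exact .inr (.inl ⟨_, ‹_›⟩)
  · exact .inl rfl
  · exact .inr (.inr ⟨_, ‹_›⟩)

lemma at_res {X : Proc} {a : ℕ} {θ : PLab} (h : AtF (.res X a) θ) : AtF X θ := by
  rcases h with ⟨Y, h⟩ | ⟨Y, h⟩ <;> cases h
  · exact .inl ⟨_, ‹_›⟩
  · exact .inr ⟨_, ‹_›⟩

lemma at_sum {A B : Proc} {θ : PLab} (h : AtF (.sum A B) θ) :
    ∃ d θ0, θ = .sum d θ0 ∧ AtF (d.sel A B) θ0 := by
  rcases h with ⟨Y, h⟩ | ⟨Y, h⟩ <;> cases h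
  · exact ⟨.L, _, rfl, .inl ⟨_, ‹_›⟩⟩
  · exact ⟨.R, _, rfl, .inl ⟨_, ‹_›⟩⟩
  · exact ⟨.L, _, rfl, .inr ⟨_, ‹_›⟩⟩
  · exact ⟨.R, _, rfl, .inr ⟨_, ‹_›⟩⟩

lemma at_par {A B : Proc} {θ : PLab} (h : AtF (.par A B) θ) :
    (∃ θ0, θ = .par .L θ0 ∧ AtF A θ0) ∨ (∃ θ0, θ = .par .R θ0 ∧ AtF B θ0) ∨
    (∃ θ1 θ2, θ = .syn θ1 θ2 ∧ AtF A θ1 ∧ AtF B θ2) := by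
  rcases h with ⟨Y, h⟩ | ⟨Y, h⟩ <;> cases h
  · exact .inl ⟨_, rfl, .inl ⟨_, ‹_›⟩⟩
  · exact .inr (.inl ⟨_, rfl, .inl ⟨_, ‹_›⟩⟩)
  · exact .inr (.inr ⟨_, _, rfl, .inl ⟨_, ‹_›⟩, .inl ⟨_, ‹_›⟩⟩)
  · exact .inl ⟨_, rfl, .inr ⟨_, ‹_›⟩⟩
  · exact .inr (.inl ⟨_, rfl, .inr ⟨_, ‹_›⟩⟩)
  · exact .inr (.inr ⟨_, _, rfl, .inr ⟨_, ‹_›⟩, .inr ⟨_, ‹_›⟩⟩)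

lemma cross {X Z : Proc} (h : Sh X Z) :
    ∀ {θ θ' : PLab}, AtF X θ → AtF Z θ' → Conn θ θ' := by
  induction h with
  | nil => intro _ _ h1 _; exact absurd h1 at_nil
  | pp _ _ => intro _ _ h1 _; obtain ⟨k, rfl⟩ := at_pre h1; exact .a1
  | pk _ _ => intro _ _ h1 _; obtain ⟨k, rfl⟩ := at_pre h1; exact .a1
  | kp _ _ => intro _ _ _ h2; obtain ⟨k, rfl⟩ := at_pre h2; exact connAct _ _ _
  | kk _ ih =>
      intro _ _ h1 h2
      rcases at_keyed h1 with rfl | h1'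
      · exact .a1
      · rcases at_keyed h2 with rfl | h2'
        · exact connAct _ _ _
        · exact ih h1' h2'
  | res _ ih => intro _ _ h1 h2; exact ih (at_res h1) (at_res h2)
  | sum _ _ ihX ihY =>
      intro _ _ h1 h2
      obtain ⟨d, θ0, rfl, hA⟩ := at_sum h1
      obtain ⟨d', θ0', rfl, hB⟩ := at_sum h2
      cases d <;> cases d'
      · exact .c1 (ihX hA hB)
      · exact .c2
      · exact .c2
      · exact .c1 (ihY hA hB)
  | par _ _ ihX ihY =>
      intro _ _ h1 h2
      rcases at_par h1 with ⟨θ0, rfl, hA⟩ | ⟨θ0, rfl, hA⟩ | ⟨θ1, θ2, rfl, hA1, hA2⟩ <;>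
        rcases at_par h2 with ⟨φ0, rfl, hB⟩ | ⟨φ0, rfl, hB⟩ | ⟨φ1, φ2, rfl, hB1, hB2⟩
      · exact .p1 (ihX hA hB)
      · exact .p2
      · exact .s1 (ihX hA hB1)
      · exact .p2
      · exact .p1 (ihY hA hB)
      · exact .s1 (ihY hA hB2)
      · exact .s2 (ihX hA1 hB)
      · exact .s2 (ihY hA2 hB)
      · exact .s3 (ihX hA1 hB1) (ihY hA2 hB2)

lemma valid_atF_src {t : Tr} (h : t.Valid) : AtF t.src t.lbl := by
  unfold Tr.Valid at h
  cases hd : t.fwd? <;> rw [hd] at h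
  · exact .inr ⟨t.tgt, bwd_fwd (by simpa [Step] using h)⟩
  · exact .inl ⟨t.tgt, by simpa [Step] using h⟩

lemma valid_atF_tgt {t : Tr} (h : t.Valid) : AtF t.tgt t.lbl := by
  unfold Tr.Valid at h
  cases hd : t.fwd? <;> rw [hd] at h
  · exact .inl ⟨t.src, bwd_fwd (by simpa [Step] using h)⟩
  · exact .inr ⟨t.src, by simpa [Step] using h⟩

lemma connected_conn {t u : Tr} (ht : t.Valid) (hu : u.Valid)
    (h : t.Connected u) : Conn t.lbl u.lbl := by
  cases h with
  | inl h => exact cross (reach_sh h) (valid_atF_src ht) (valid_atF_tgt hu)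
  | inr h => exact conn_symm (cross (reach_sh h) (valid_atF_src hu) (valid_atF_tgt ht))

lemma evEq_lbl {t u : Tr} (h : EvEq t u) : t.lbl = u.lbl := by
  induction h with
  | refl _ => rfl
  | symm _ ih => exact ih.symm
  | trans _ _ ih1 ih2 => exact ih1.trans ih2
  | sq hsq _ =>
      obtain ⟨-, -, -, -, -, -, -, -, -, -, h11, -⟩ := hsq
      exact h11.symm
  | sqrev hsq _ =>
      obtain ⟨-, -, -, -, -, -, -, -, -, -, h11, -⟩ := hsq
      exact h11.symm
lemma comm_ff {A B : Proc} {θ1 : PLab} (h1 : Fwd A θ1 B) :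
    ∀ {θ2 : PLab} {C : Proc}, Fwd B θ2 C → Ind θ1 θ2 →
      ∃ B', Fwd A θ2 B' ∧ Fwd B' θ1 C := by
  induction h1 with
  | act _ => intro θ2 C _ hI; cases hI
  | pre hX hk ih =>
      intro θ2 C h2 hI
      cases h2 with
      | pre hX' hk2 =>
          obtain ⟨X0, g1, g2⟩ := ih hX' hI
          exact ⟨_, .pre g1 hk2, .pre g2 hk⟩
  | res hX hl1 hl2 ih =>
      intro θ2 C h2 hI
      cases h2 with
      | res hX' hl1' hl2' =>
          obtain ⟨X0, g1, g2⟩ := ih hX' hI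
          exact ⟨_, .res g1 hl1' hl2', .res g2 hl1 hl2⟩
  | parL hX hkY ih =>
      intro θ2 C h2 hI
      cases hI with
      | p1 hI' =>
          cases h2 with
          | parL hX' hkY' =>
              obtain ⟨X0, g1, g2⟩ := ih hX' hI'
              exact ⟨_, .parL g1 hkY', .parL g2 hkY⟩
      | p2k hne =>
          cases h2 with
          | parR hY hkX' =>
              exact ⟨_, .parR hY (fwd_keys_mono hX hkX'),
                .parL hX (fwd_keys_notmem hY hne hkY)⟩
      | s1 hI' =>
          cases h2 with
          | syn hXL hYR ip1 ip2 nt hbar hkeq =>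
              obtain ⟨X0, g1, g2⟩ := ih hXL hI'
              have hfresh := fwd_fresh hXL
              rw [fwd_keys hX] at hfresh
              simp only [Finset.mem_insert, not_or] at hfresh
              refine ⟨_, .syn g1 hYR ip1 ip2 nt hbar hkeq, .parL g2 ?_⟩
              exact fwd_keys_notmem hYR
                (fun h => hfresh.1 (h.trans hkeq).symm) hkY
  | parR hY hkX ih =>
      intro θ2 C h2 hI
      cases hI with
      | p1 hI' =>
          cases h2 with
          | parR hY' hkX' =>
              obtain ⟨Y0, g1, g2⟩ := ih hY' hI'
              exact ⟨_, .parR g1 hkX', .parR g2 hkX⟩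
      | p2k hne =>
          cases h2 with
          | parL hX hkY' =>
              exact ⟨_, .parL hX (fwd_keys_mono hY hkY'),
                .parR hY (fwd_keys_notmem hX hne hkX)⟩
      | s1 hI' =>
          cases h2 with
          | syn hXL hYR ip1 ip2 nt hbar hkeq =>
              obtain ⟨Y0, g1, g2⟩ := ih hYR hI'
              have hfresh := fwd_fresh hYR
              rw [fwd_keys hY] at hfresh
              simp only [Finset.mem_insert, not_or] at hfresh
              refine ⟨_, .syn hXL g1 ip1 ip2 nt hbar hkeq, .parR g2 ?_⟩
              exact fwd_keys_notmem hXL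
                (fun h => hfresh.1 ((h.trans hkeq.symm)).symm) hkX
  | syn hX hY ip1 ip2 nt hbar hkeq ihX ihY =>
      intro θ2 C h2 hI
      cases hI with
      | s2 hI' =>
          rename_i d _
          cases d
          · cases h2 with
            | parL hX' hkY' =>
                obtain ⟨X0, g1, g2⟩ := ihX hX' hI'
                exact ⟨_, .parL g1 (fwd_keys_mono hY hkY'),
                  .syn g2 hY ip1 ip2 nt hbar hkeq⟩
          · cases h2 with
            | parR hY' hkX' =>
                obtain ⟨Y0, g1, g2⟩ := ihY hY' hI'
                exact ⟨_, .parR g1 (fwd_keys_mono hX hkX'),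
                  .syn hX g2 ip1 ip2 nt hbar hkeq⟩
      | s3 hIa hIb =>
          cases h2 with
          | syn hX' hY' ip1' ip2' nt' hbar' hkeq' =>
              obtain ⟨X0, g1, g2⟩ := ihX hX' hIa
              obtain ⟨Y0, g1', g2'⟩ := ihY hY' hIb
              exact ⟨_, .syn g1 g1' ip1' ip2' nt' hbar' hkeq',
                .syn g2 g2' ip1 ip2 nt hbar hkeq⟩
  | sumL hX hYstd ih =>
      intro θ2 C h2 hI
      cases hI with
      | c1 hI' =>
          cases h2 with
          | sumL hX' _ =>
              obtain ⟨X0, g1, g2⟩ := ih hX' hI'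
              exact ⟨_, .sumL g1 hYstd, .sumL g2 hYstd⟩
  | sumR hY hXstd ih =>
      intro θ2 C h2 hI
      cases hI with
      | c1 hI' =>
          cases h2 with
          | sumR hY' _ =>
              obtain ⟨Y0, g1, g2⟩ := ih hY' hI'
              exact ⟨_, .sumR g1 hXstd, .sumR g2 hXstd⟩
lemma comm_fb {A B : Proc} {θ1 : PLab} (h1 : Fwd A θ1 B) :
    ∀ {θ2 : PLab} {C : Proc}, Fwd C θ2 B → Ind θ1 θ2 →
      ∃ B', Fwd B' θ2 A ∧ Fwd B' θ1 C := by
  induction h1 with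
  | act _ => intro θ2 C _ hI; cases hI
  | pre hX hk ih =>
      intro θ2 C h2 hI
      cases h2 with
      | act _ => cases hI
      | pre hX2 hk2 =>
          obtain ⟨X0, g1, g2⟩ := ih hX2 hI
          exact ⟨_, .pre g1 hk2, .pre g2 hk⟩
  | res hX hl1 hl2 ih =>
      intro θ2 C h2 hI
      cases h2 with
      | res hX2 hl1' hl2' =>
          obtain ⟨X0, g1, g2⟩ := ih hX2 hI
          exact ⟨_, .res g1 hl1' hl2', .res g2 hl1 hl2⟩
  | parL hX hkY ih =>
      intro θ2 C h2 hI
      cases hI with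
      | p1 hI' =>
          cases h2 with
          | parL hX2 hkY2 =>
              obtain ⟨X0, g1, g2⟩ := ih hX2 hI'
              exact ⟨_, .parL g1 hkY2, .parL g2 hkY⟩
      | p2k hne =>
          cases h2 with
          | parR hY hkX' =>
              exact ⟨_, .parR hY (fwd_keys_mono hX hkX'),
                .parL hX (fwd_keys_mono hY hkY)⟩
      | s1 hI' =>
          cases h2 with
          | syn hXL hYR ip1 ip2 nt hbar hkeq =>
              obtain ⟨X0, g1, g2⟩ := ih hXL hI'
              exact ⟨_, .syn g1 hYR ip1 ip2 nt hbar hkeq,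
                .parL g2 (fwd_keys_mono hYR hkY)⟩
  | parR hY hkX ih =>
      intro θ2 C h2 hI
      cases hI with
      | p1 hI' =>
          cases h2 with
          | parR hY2 hkX2 =>
              obtain ⟨Y0, g1, g2⟩ := ih hY2 hI'
              exact ⟨_, .parR g1 hkX2, .parR g2 hkX⟩
      | p2k hne =>
          cases h2 with
          | parL hX hkY' =>
              exact ⟨_, .parL hX (fwd_keys_mono hY hkY'),
                .parR hY (fwd_keys_mono hX hkX)⟩
      | s1 hI' =>
          cases h2 with
          | syn hXL hYR ip1 ip2 nt hbar hkeq =>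
              obtain ⟨Y0, g1, g2⟩ := ih hYR hI'
              exact ⟨_, .syn hXL g1 ip1 ip2 nt hbar hkeq,
                .parR g2 (fwd_keys_mono hXL hkX)⟩
  | syn hX hY ip1 ip2 nt hbar hkeq ihX ihY =>
      intro θ2 C h2 hI
      cases hI with
      | s2 hI' =>
          rename_i d _
          cases d
          · cases h2 with
            | parL hX2 hkY' =>
                obtain ⟨X0, g1, g2⟩ := ihX hX2 hI'
                exact ⟨_, .parL g1 (fwd_keys_mono hY hkY'),
                  .syn g2 hY ip1 ip2 nt hbar hkeq⟩
          · cases h2 with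
            | parR hY2 hkX' =>
                obtain ⟨Y0, g1, g2⟩ := ihY hY2 hI'
                exact ⟨_, .parR g1 (fwd_keys_mono hX hkX'),
                  .syn hX g2 ip1 ip2 nt hbar hkeq⟩
      | s3 hIa hIb =>
          cases h2 with
          | syn hX2 hY2 ip1' ip2' nt' hbar' hkeq' =>
              obtain ⟨X0, g1, g2⟩ := ihX hX2 hIa
              obtain ⟨Y0, g1', g2'⟩ := ihY hY2 hIb
              exact ⟨_, .syn g1 g1' ip1' ip2' nt' hbar' hkeq',
                .syn g2 g2' ip1 ip2 nt hbar hkeq⟩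
  | sumL hX hYstd ih =>
      intro θ2 C h2 hI
      cases hI with
      | c1 hI' =>
          cases h2 with
          | sumL hX2 _ =>
              obtain ⟨X0, g1, g2⟩ := ih hX2 hI'
              exact ⟨_, .sumL g1 hYstd, .sumL g2 hYstd⟩
  | sumR hY hXstd ih =>
      intro θ2 C h2 hI
      cases hI with
      | c1 hI' =>
          cases h2 with
          | sumR hY2 _ =>
              obtain ⟨Y0, g1, g2⟩ := ih hY2 hI'
              exact ⟨_, .sumR g1 hXstd, .sumR g2 hXstd⟩

lemma comm_bf {B A : Proc} {θ1 : PLab} (h1 : Fwd B θ1 A) :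
    ∀ {θ2 : PLab} {C : Proc}, Fwd B θ2 C → Ind θ1 θ2 →
      (∃ B', Fwd A θ2 B' ∧ Fwd C θ1 B') ∧ θ1.key ≠ θ2.key := by
  induction h1 with
  | act _ => intro θ2 C _ hI; cases hI
  | pre hX hk ih =>
      intro θ2 C h2 hI
      cases h2 with
      | pre hX2 hk2 =>
          obtain ⟨⟨X0, g1, g2⟩, hne⟩ := ih hX2 hI
          exact ⟨⟨_, .pre g1 hk2, .pre g2 hk⟩, hne⟩
  | res hX hl1 hl2 ih =>
      intro θ2 C h2 hI
      cases h2 with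
      | res hX2 hl1' hl2' =>
          obtain ⟨⟨X0, g1, g2⟩, hne⟩ := ih hX2 hI
          exact ⟨⟨_, .res g1 hl1' hl2', .res g2 hl1 hl2⟩, hne⟩
  | parL hX hkY ih =>
      intro θ2 C h2 hI
      cases hI with
      | p1 hI' =>
          cases h2 with
          | parL hX2 hkY2 =>
              obtain ⟨⟨X0, g1, g2⟩, hne⟩ := ih hX2 hI'
              exact ⟨⟨_, .parL g1 hkY2, .parL g2 hkY⟩, hne⟩
      | p2k hne =>
          cases h2 with
          | parR hY hkX =>
              refine ⟨⟨_, .parR hY ?_, .parL hX ?_⟩, hne⟩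
              · exact fwd_keys_notmem hX (Ne.symm hne) hkX
              · exact fwd_keys_notmem hY hne hkY
      | s1 hI' =>
          cases h2 with
          | syn hXL hYR ip1 ip2 nt hbar hkeq =>
              obtain ⟨⟨X0, g1, g2⟩, hne⟩ := ih hXL hI'
              refine ⟨⟨_, .syn g1 hYR ip1 ip2 nt hbar hkeq, .parL g2 ?_⟩, hne⟩
              exact fwd_keys_notmem hYR (hkeq ▸ hne) hkY
  | parR hY hkX ih =>
      intro θ2 C h2 hI
      cases hI with
      | p1 hI' =>
          cases h2 with
          | parR hY2 hkX2 =>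
              obtain ⟨⟨Y0, g1, g2⟩, hne⟩ := ih hY2 hI'
              exact ⟨⟨_, .parR g1 hkX2, .parR g2 hkX⟩, hne⟩
      | p2k hne =>
          cases h2 with
          | parL hX hkY =>
              refine ⟨⟨_, .parL hX ?_, .parR hY ?_⟩, hne⟩
              · exact fwd_keys_notmem hY (Ne.symm hne) hkY
              · exact fwd_keys_notmem hX hne hkX
      | s1 hI' =>
          cases h2 with
          | syn hXL hYR ip1 ip2 nt hbar hkeq =>
              obtain ⟨⟨Y0, g1, g2⟩, hne⟩ := ih hYR hI'
              refine ⟨⟨_, .syn hXL g1 ip1 ip2 nt hbar hkeq, .parR g2 ?_⟩, ?_⟩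
              · exact fwd_keys_notmem hXL (fun h => hne (h.trans hkeq.symm)) hkX
              · exact fun h => hne (h.trans hkeq.symm)
  | syn hX hY ip1 ip2 nt hbar hkeq ihX ihY =>
      intro θ2 C h2 hI
      cases hI with
      | s2 hI' =>
          rename_i d _
          cases d
          · cases h2 with
            | parL hX2 hkY =>
                obtain ⟨⟨X0, g1, g2⟩, hne⟩ := ihX hX2 hI'
                refine ⟨⟨_, .parL g1 ?_, .syn g2 hY ip1 ip2 nt hbar hkeq⟩, hne⟩
                exact fwd_keys_notmem hY (fun h => hne (hkeq ▸ h).symm) hkY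
          · cases h2 with
            | parR hY2 hkX =>
                obtain ⟨⟨Y0, g1, g2⟩, hne⟩ := ihY hY2 hI'
                refine ⟨⟨_, .parR g1 ?_, .syn hX g2 ip1 ip2 nt hbar hkeq⟩, ?_⟩
                · exact fwd_keys_notmem hX (fun h => hne (h.trans hkeq.symm).symm) hkX
                · exact fun h => hne (hkeq.trans h)
      | s3 hIa hIb =>
          cases h2 with
          | syn hX2 hY2 ip1' ip2' nt' hbar' hkeq' =>
              obtain ⟨⟨X0, g1, g2⟩, hneA⟩ := ihX hX2 hIa
              obtain ⟨⟨Y0, g1', g2'⟩, hneB⟩ := ihY hY2 hIb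
              exact ⟨⟨_, .syn g1 g1' ip1' ip2' nt' hbar' hkeq',
                .syn g2 g2' ip1 ip2 nt hbar hkeq⟩, hneA⟩
  | sumL hX hYstd ih =>
      intro θ2 C h2 hI
      cases hI with
      | c1 hI' =>
          cases h2 with
          | sumL hX2 _ =>
              obtain ⟨⟨X0, g1, g2⟩, hne⟩ := ih hX2 hI'
              exact ⟨⟨_, .sumL g1 hYstd, .sumL g2 hYstd⟩, hne⟩
  | sumR hY hXstd ih =>
      intro θ2 C h2 hI
      cases hI with
      | c1 hI' =>
          cases h2 with
          | sumR hY2 _ =>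
              obtain ⟨⟨Y0, g1, g2⟩, hne⟩ := ih hY2 hI'
              exact ⟨⟨_, .sumR g1 hXstd, .sumR g2 hXstd⟩, hne⟩

lemma comm_step {A B C : Proc} {d1 d2 : Bool} {θ1 θ2 : PLab}
    (h1 : Step A d1 θ1 B) (h2 : Step B d2 θ2 C) (hI : Ind θ1 θ2) :
    ∃ B', Step A d2 θ2 B' ∧ Step B' d1 θ1 C := by
  cases d1 <;> cases d2 <;> simp only [Step, if_true, if_false, Bool.false_eq_true,
    ite_true, ite_false] at h1 h2 ⊢
  · obtain ⟨B', g1, g2⟩ := comm_ff (bwd_fwd h2) (bwd_fwd h1) (ind_symm hI)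
    exact ⟨B', fwd_bwd g2, fwd_bwd g1⟩
  · obtain ⟨⟨B', g1, g2⟩, -⟩ := comm_bf (bwd_fwd h1) h2 hI
    exact ⟨B', g1, fwd_bwd g2⟩
  · obtain ⟨B', g1, g2⟩ := comm_fb h1 (bwd_fwd h2) hI
    exact ⟨B', fwd_bwd g1, g2⟩
  · exact comm_ff h1 h2 hI

/-- **Complementarity for events.** For connected events of the LTSI of CCSKP:
(1) exactly one of e1 ι e2 and e1 ⊙ e2 holds; (2) core independence implies
independence; (3) for composable events, independence implies core independence. -/
theorem complementarity_for_events (e1 e2 : Tr)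
    (h1 : e1.Valid) (h2 : e2.Valid)
    (hr1 : Reachable e1.src) (hr2 : Reachable e2.src)
    (hconn : EvConnected e1 e2) :
    ((EvInd e1 e2 ∨ EvDep e1 e2) ∧ ¬ (EvInd e1 e2 ∧ EvDep e1 e2)) ∧
    (CoreInd e1 e2 → EvInd e1 e2) ∧
    (EvComposable e1 e2 → EvInd e1 e2 → CoreInd e1 e2) := by
  obtain ⟨t, t', het, het', hvt, hvt', hc⟩ := hconn
  have hlt : t.lbl = e1.lbl := evEq_lbl het
  have hlt' : t'.lbl = e2.lbl := evEq_lbl het'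
  have hConn : Conn e1.lbl e2.lbl := by
    have := connected_conn hvt hvt' hc
    rwa [hlt, hlt'] at this
  have hEvInd : EvInd e1 e2 → Ind e1.lbl e2.lbl := by
    rintro ⟨a, b, ha, hb, -, -, -, hi⟩
    rwa [evEq_lbl ha, evEq_lbl hb] at hi
  have hEvDep : EvDep e1 e2 → Dep e1.lbl e2.lbl := by
    rintro ⟨a, b, ha, hb, -, -, hd⟩
    rwa [evEq_lbl ha, evEq_lbl hb] at hd
  refine ⟨⟨?_, ?_⟩, ?_, ?_⟩
  · rcases conn_total hConn with hi | hd
    · exact .inl ⟨t, t', het, het', hvt, hvt', hc, by rw [hlt, hlt']; exact hi⟩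
    · exact .inr ⟨e1, e2, .refl _, .refl _, h1, h2, hd⟩
  · rintro ⟨hi, hd⟩
    exact ind_dep_false (hEvInd hi) (hEvDep hd)
  · rintro ⟨a, b, ha, hb, -, hind⟩
    exact ⟨a, b, ha, hb, hind⟩
  · rintro ⟨a, b, ha, hb, hva, hvb, hab⟩ hEI
    have hIl : Ind a.lbl b.lbl := by
      rw [evEq_lbl ha, evEq_lbl hb]
      exact hEvInd hEI
    have hvb2 : Step a.tgt b.fwd? b.lbl b.tgt := hab ▸ hvb
    obtain ⟨B', hc1, hc2⟩ := comm_step hva hvb2 hIl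
    have hsq : Square ⟨a.src, b.fwd?, b.lbl, B'⟩ a ⟨B', a.fwd?, a.lbl, b.tgt⟩ b :=
      ⟨hc1, hva, hc2, hvb, rfl, rfl, hab.symm, rfl, rfl, rfl, rfl, rfl⟩
    have hindba : Tr.ind ⟨a.src, b.fwd?, b.lbl, B'⟩ a :=
      ⟨hc1, hva, Or.inl (Reach.step hva (Reach.refl _)), ind_symm hIl⟩
    have heq : EvEq (⟨a.src, b.fwd?, b.lbl, B'⟩ : Tr) b := EvEq.sq hsq hindba
    exact ⟨a, ⟨a.src, b.fwd?, b.lbl, B'⟩, ha, heq.trans hb, rfl,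
      hva, hc1, Or.inl (Reach.step hc1 (Reach.refl _)), hIl⟩

end CCSKP
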